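/- arXiv:1206.3659 — 5 statements merged into one kernel-verified Lean document; each statement's English description precedes it below -/
import Mathlib

section
/- If f belongs to the Sobolev space H^1 on the circle S = R/Z and has zero mean, i.e. ∫_S f(x) dx = 0, then max_{x∈S} f(x)^2 ≤ (1/12) ∫_S f_x(x)^2 dx. -/
open MeasureTheory intervalIntegral

private lemma fubini_primitive' (g : ℝ → ℝ) (a b : ℝ) (hab : a ≤ b)
    (hg : IntegrableOn g (Set.Ioc a b) volume) :
    ∫ y in a..b, (∫ t in a..y, g t) = ∫ t in a..b, (b - t) * g t := by
  set μ := volume.restrict (Set.Ioc a b) with hμ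
  set G : ℝ × ℝ → ℝ := fun p => if p.2 ≤ p.1 then g p.2 else 0 with hG
  have hs : MeasurableSet {p : ℝ × ℝ | p.2 ≤ p.1} :=
    measurableSet_le measurable_snd measurable_fst
  have h1 : AEStronglyMeasurable (fun p : ℝ × ℝ => g p.2) (μ.prod μ) :=
    hg.aestronglyMeasurable.comp_snd
  have hGind : G = Set.indicator {p : ℝ × ℝ | p.2 ≤ p.1} (fun p => g p.2) := by
    funext p
    simp [hG, Set.indicator_apply]
  have hint2 : Integrable (fun p : ℝ × ℝ => g p.2) (μ.prod μ) := by
    rw [MeasureTheory.integrable_prod_iff h1]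
    refine ⟨Filter.Eventually.of_forall fun x => hg, ?_⟩
    simpa using integrable_const (μ := μ) (∫ t, ‖g t‖ ∂μ)
  have hGint : Integrable G (μ.prod μ) := by
    rw [hGind]; exact hint2.indicator hs
  have hswap : ∫ y, (∫ t, G (y, t) ∂μ) ∂μ = ∫ t, (∫ y, G (y, t) ∂μ) ∂μ :=
    MeasureTheory.integral_integral_swap hGint
  -- inner LHS
  have hL : ∀ y ∈ Set.Ioc a b, (∫ t, G (y, t) ∂μ) = ∫ t in a..y, g t := by
    intro y hy
    have : (fun t => G (y, t)) = Set.indicator (Set.Iic y) g := by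
      funext t; simp [hG, Set.indicator_apply]
    rw [this, hμ, MeasureTheory.setIntegral_indicator measurableSet_Iic,
      Set.Ioc_inter_Iic, min_eq_right hy.2, intervalIntegral.integral_of_le hy.1.le]
  have hR : ∀ t ∈ Set.Ioc a b, (∫ y, G (y, t) ∂μ) = (b - t) * g t := by
    intro t ht
    have : (fun y => G (y, t)) = Set.indicator (Set.Ici t) (fun _ => g t) := by
      funext y; simp [hG, Set.indicator_apply]
    rw [this, hμ, MeasureTheory.setIntegral_indicator measurableSet_Ici]
    have hset : Set.Ioc a b ∩ Set.Ici t = Set.Icc t b := by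
      ext z
      simp only [Set.mem_inter_iff, Set.mem_Ioc, Set.mem_Ici, Set.mem_Icc]
      constructor
      · rintro ⟨⟨_, hz2⟩, hz3⟩; exact ⟨hz3, hz2⟩
      · rintro ⟨hz1, hz2⟩; exact ⟨⟨lt_of_lt_of_le ht.1 hz1, hz2⟩, hz1⟩
    rw [hset, MeasureTheory.setIntegral_const, Real.volume_real_Icc_of_le (by linarith [ht.2] : t ≤ b), smul_eq_mul]
  calc ∫ y in a..b, (∫ t in a..y, g t)
      = ∫ y in Set.Ioc a b, (∫ t in a..y, g t) := intervalIntegral.integral_of_le hab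
    _ = ∫ y, (∫ t, G (y, t) ∂μ) ∂μ := by
        rw [hμ]
        exact (MeasureTheory.setIntegral_congr_fun measurableSet_Ioc
          (fun y hy => (hL y hy).symm))
    _ = ∫ t, (∫ y, G (y, t) ∂μ) ∂μ := hswap
    _ = ∫ t in Set.Ioc a b, (b - t) * g t := by
        rw [hμ]
        exact MeasureTheory.setIntegral_congr_fun measurableSet_Ioc hR
    _ = ∫ t in a..b, (b - t) * g t := (intervalIntegral.integral_of_le hab).symm

/-- If `f ∈ H¹(S)` (i.e. `f` is absolutely continuous with weak derivative
`f' ∈ L²` and `f` is 1-periodic) and `f` has zero mean on the circle `S = ℝ/ℤ`, then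
`max_{x ∈ S} f(x)² ≤ (1/12) ∫_S f'(x)² dx`. -/
theorem max_sq_le_twelfth_integral_deriv_sq
    (f f' : ℝ → ℝ)
    (hper : Function.Periodic f 1)
    (hf'per : Function.Periodic f' 1)
    (hf'int : ∀ a b : ℝ, IntervalIntegrable f' volume a b)
    (hf'sq : ∀ a b : ℝ, IntervalIntegrable (fun x => (f' x) ^ 2) volume a b)
    (hFTC : ∀ x : ℝ, f x = f 0 + ∫ t in (0:ℝ)..x, f' t)
    (hmean : (∫ x in (0:ℝ)..1, f x) = 0) :
    ∀ x : ℝ, (f x) ^ 2 ≤ (1 / 12) * ∫ y in (0:ℝ)..1, (f' y) ^ 2 := by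
  intro x
  set a := x with ha
  set b := x + 1 with hb
  have hab : a ≤ b := by simp [ha, hb]
  set c := x + 1/2 with hc
  -- continuity of f
  have hfcont : Continuous f := by
    have hfe : f = fun y => f 0 + ∫ t in (0:ℝ)..y, f' t := funext hFTC
    rw [hfe]
    exact continuous_const.add (intervalIntegral.continuous_primitive hf'int 0)
  have hfint : ∀ a b : ℝ, IntervalIntegrable f volume a b :=
    fun a b => hfcont.intervalIntegrable a b
  -- f y = f x + ∫ x..y f'
  have h5 : ∀ y : ℝ, f y = f x + ∫ t in a..y, f' t := by
    intro y
    have := intervalIntegral.integral_add_adjacent_intervals (hf'int 0 a) (hf'int a y)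
    rw [hFTC y, hFTC x, ← this]
    ring
  -- mean over [x, x+1] is 0
  have hmean' : (∫ y in a..b, f y) = 0 := by
    have := hper.intervalIntegral_add_eq a 0
    simpa [hb] using this.trans (by simpa using hmean)
  -- ∫ f' over the period is 0
  have hf'zero : (∫ t in a..b, f' t) = 0 := by
    have h1 := h5 b
    have h2 : f b = f x := hper x
    rw [h2] at h1
    linarith
  -- key representation
  have hreps : f x = ∫ t in a..b, (t - c) * f' t := by
    have hprim_cont : Continuous fun y => ∫ t in a..y, f' t :=
      intervalIntegral.continuous_primitive hf'int a
    have h6 : (∫ y in a..b, f y) =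
        (∫ y in a..b, f x) + ∫ y in a..b, (∫ t in a..y, f' t) := by
      rw [← intervalIntegral.integral_add (intervalIntegrable_const)
        (hprim_cont.intervalIntegrable a b)]
      exact intervalIntegral.integral_congr fun y _ => h5 y
    have h7 : (∫ y in a..b, (∫ t in a..y, f' t)) = ∫ t in a..b, (b - t) * f' t :=
      fubini_primitive' f' a b hab (hf'int a b).1
    have h8 : (∫ y in a..b, f x) = f x := by
      simp [hb, ha]
    have h9 : f x + (∫ t in a..b, (b - t) * f' t) = 0 := by
      rw [← h8, ← h7, ← h6, hmean']
    -- now: ∫ (t-c) f' = ∫ ((b - t) f') * (-1) + (1/2) ∫ f'... compute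
    have hbt : IntervalIntegrable (fun t => (b - t) * f' t) volume a b :=
      (hf'int a b).continuousOn_mul (by fun_prop)
    have h10 : (∫ t in a..b, (t - c) * f' t)
        = (∫ t in a..b, (1/2 : ℝ) * f' t) - ∫ t in a..b, (b - t) * f' t := by
      rw [← intervalIntegral.integral_sub ((hf'int a b).const_mul _) hbt]
      refine intervalIntegral.integral_congr fun t _ => ?_
      simp only [hb, hc]
      ring
    rw [h10, intervalIntegral.integral_const_mul, hf'zero]
    linarith
  -- the three quantities
  set B := ∫ t in a..b, (t - c) * f' t with hB
  set C := ∫ t in a..b, (f' t) ^ 2 with hC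
  have hA : (∫ t in a..b, (t - c) ^ 2) = 1/12 := by
    have := intervalIntegral.integral_comp_sub_right (a := a) (b := b)
      (fun s => s ^ 2) c
    rw [this]
    have h1 : a - c = -(1/2) := by simp only [ha, hc]; ring
    have h2 : b - c = 1/2 := by simp only [hb, hc]; ring
    rw [h1, h2, integral_pow]
    norm_num
  -- C equals integral over [0,1]
  have hCper : C = ∫ y in (0:ℝ)..1, (f' y) ^ 2 := by
    have hp : Function.Periodic (fun t => (f' t) ^ 2) 1 := fun t => by
      simp [hf'per t]
    have := hp.intervalIntegral_add_eq a 0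
    simpa [hb, hC] using this
  -- integrability facts
  have Iu2 : IntervalIntegrable (fun t => (t - c) ^ 2) volume a b :=
    (continuous_id.sub continuous_const).pow 2 |>.intervalIntegrable a b
  have Iuf : IntervalIntegrable (fun t => (t - c) * f' t) volume a b :=
    (hf'int a b).continuousOn_mul (by fun_prop)
  have If2 : IntervalIntegrable (fun t => (f' t) ^ 2) volume a b := hf'sq a b
  -- quadratic form nonneg
  have P : ∀ l : ℝ, 0 ≤ 1/12 - 2 * l * B + l ^ 2 * C := by
    intro l
    have h0 : 0 ≤ ∫ t in a..b, ((t - c) - l * f' t) ^ 2 :=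
      intervalIntegral.integral_nonneg hab (fun u _ => sq_nonneg _)
    have hexp : (∫ t in a..b, ((t - c) - l * f' t) ^ 2)
        = (∫ t in a..b, (t - c) ^ 2) - (2 * l) * B + l ^ 2 * C := by
      have hcg : (∫ t in a..b, ((t - c) - l * f' t) ^ 2)
          = ∫ t in a..b, ((t - c) ^ 2 - (2 * l) * ((t - c) * f' t)
              + l ^ 2 * (f' t) ^ 2) := by
        refine intervalIntegral.integral_congr fun t _ => ?_
        ring
      rw [hcg, intervalIntegral.integral_add (Iu2.sub (Iuf.const_mul _))
            (If2.const_mul _),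
          intervalIntegral.integral_sub Iu2 (Iuf.const_mul _),
          intervalIntegral.integral_const_mul, intervalIntegral.integral_const_mul,
          hB, hC]
    rw [hexp, hA] at h0
    linarith
  have hCnn : 0 ≤ C :=
    intervalIntegral.integral_nonneg hab (fun u _ => sq_nonneg _)
  have key : B ^ 2 ≤ (1/12) * C := by
    rcases eq_or_lt_of_le hCnn with hC0 | hCpos
    · have hB0 : B = 0 := by
        by_contra hB0
        have h2 := P (1 / B)
        rw [← hC0] at h2
        have h3 : (1 / B) * B = 1 := one_div_mul_cancel hB0
        nlinarith
      rw [hB0, ← hC0]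
      norm_num
    · have h := P (B / C)
      have h1 : (B / C) ^ 2 * C = B ^ 2 / C := by
        field_simp
      have h2 : 2 * (B / C) * B = 2 * B ^ 2 / C := by
        field_simp
      rw [h1, h2] at h
      have h3 : 0 ≤ 1/12 - B ^ 2 / C := by
        have : 2 * B ^ 2 / C - B ^ 2 / C = B ^ 2 / C := by ring
        linarith
      have h4 : B ^ 2 / C ≤ 1/12 := by linarith
      calc B ^ 2 = (B ^ 2 / C) * C := by field_simp
        _ ≤ (1/12) * C := mul_le_mul_of_nonneg_right h4 hCnn
  rw [hreps, ← hCper]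
  exact key
end

section
/- Let u ∈ H^1(S) with mean value μ₀ = ∫_S u dx and let μ₁ = (∫_S u_x² dx)^{1/2}. Then the sup-norm of u satisfies ‖u‖_{L^∞(S)} ≤ |μ₀| + (√3/6) μ₁. -/
open MeasureTheory intervalIntegral Set

lemma fubini_aux (u' : ℝ → ℝ) (h : IntegrableOn u' (Ioc (0:ℝ) 1)) :
    ∫ y in Ioc (0:ℝ) 1, ∫ t in Ioc (0:ℝ) 1, (if t ≤ y then u' t else 0)
      = ∫ t in Ioc (0:ℝ) 1, (1 - t) * u' t := by
  set μ := volume.restrict (Ioc (0:ℝ) 1) with hμ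
  have hS : MeasurableSet {p : ℝ × ℝ | p.2 ≤ p.1} := measurableSet_le measurable_snd measurable_fst
  have hf : AEStronglyMeasurable (Function.uncurry fun y t => if t ≤ y then u' t else 0) (μ.prod μ) := by
    have h1 : AEStronglyMeasurable (fun p : ℝ × ℝ => u' p.2) (μ.prod μ) :=
      h.aestronglyMeasurable.comp_snd
    have : (Function.uncurry fun y t => if t ≤ y then u' t else 0)
        = {p : ℝ × ℝ | p.2 ≤ p.1}.indicator (fun p => u' p.2) := by
      ext p; by_cases hp : p.2 ≤ p.1 <;>
        simp [Function.uncurry, hp, Set.indicator_apply]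
    rw [this]
    exact h1.indicator hS
  have hμuniv : μ Set.univ = 1 := by
    simp [hμ, Real.volume_Ioc]
  have hint2 : Integrable (fun p : ℝ × ℝ => u' p.2) (μ.prod μ) := by
    have hmap : Measure.map Prod.snd (μ.prod μ) = μ := by
      rw [Measure.map_snd_prod, hμuniv, one_smul]
    have := (integrable_map_measure (f := Prod.snd) (g := u')
      (by rw [hmap]; exact h.aestronglyMeasurable) measurable_snd.aemeasurable).mp
      (by rw [hmap]; exact h)
    exact this
  have hint : Integrable (Function.uncurry fun y t => if t ≤ y then u' t else 0) (μ.prod μ) := by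
    refine hint2.norm.mono' hf ?_
    filter_upwards with p
    by_cases hp : p.2 ≤ p.1 <;> simp [Function.uncurry, hp]
  rw [integral_integral_swap hint]
  refine setIntegral_congr_fun measurableSet_Ioc fun t ht => ?_
  have : ∫ y in Ioc (0:ℝ) 1, (if t ≤ y then u' t else 0)
      = ∫ y in Ioc (0:ℝ) 1, (Ici t).indicator (fun _ => u' t) y := by
    refine setIntegral_congr_fun measurableSet_Ioc fun y _ => ?_
    by_cases hy : t ≤ y <;> simp [hy, Set.indicator_apply]
  rw [this, setIntegral_indicator measurableSet_Ici]
  have hinter : Ioc (0:ℝ) 1 ∩ Ici t = Icc t 1 := by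
    ext z; constructor
    · rintro ⟨⟨_, hz1⟩, hz2⟩; exact ⟨hz2, hz1⟩
    · rintro ⟨hz1, hz2⟩; exact ⟨⟨lt_of_lt_of_le ht.1 hz1, hz2⟩, hz1⟩
  rw [hinter, setIntegral_const, Real.volume_real_Icc, smul_eq_mul,
    max_eq_left (by linarith [ht.2])]

lemma key_bound
    (u u' : ℝ → ℝ)
    (hper : Function.Periodic u 1)
    (hu'int : ∀ a b : ℝ, IntervalIntegrable u' volume a b)
    (hu'sq : ∀ a b : ℝ, IntervalIntegrable (fun x => (u' x) ^ 2) volume a b)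
    (hFTC : ∀ x : ℝ, u x = u 0 + ∫ t in (0:ℝ)..x, u' t)
    (x : ℝ) (hx : x ∈ Icc (0:ℝ) 1) :
    |u x| ≤ |∫ y in (0:ℝ)..1, u y|
      + Real.sqrt 3 / 6 * Real.sqrt (∫ y in (0:ℝ)..1, (u' y) ^ 2) := by
  obtain ⟨hx0, hx1⟩ := hx
  set F : ℝ → ℝ := fun y => ∫ t in (0:ℝ)..y, u' t with hF
  have hFcont : Continuous F := intervalIntegral.continuous_primitive hu'int 0
  have hF1 : F 1 = 0 := by
    have h1 : u 1 = u 0 := by simpa using hper 0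
    have := hFTC 1
    rw [h1] at this
    linarith [this]
  -- the mean
  have hmean : ∫ y in (0:ℝ)..1, u y = u 0 + ∫ y in (0:ℝ)..1, F y := by
    have : ∫ y in (0:ℝ)..1, u y = ∫ y in (0:ℝ)..1, (u 0 + F y) := by
      apply intervalIntegral.integral_congr
      intro y _; exact hFTC y
    rw [this, intervalIntegral.integral_add intervalIntegrable_const
      (hFcont.intervalIntegrable 0 1)]
    simp
  -- Fubini step
  have hIoc : IntegrableOn u' (Ioc (0:ℝ) 1) := by
    have := hu'int 0 1
    rwa [intervalIntegrable_iff_integrableOn_Ioc_of_le (by norm_num)] at this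
  have hFub : ∫ y in (0:ℝ)..1, F y = ∫ t in (0:ℝ)..1, (1 - t) * u' t := by
    rw [intervalIntegral.integral_of_le (by norm_num : (0:ℝ) ≤ 1),
        intervalIntegral.integral_of_le (by norm_num : (0:ℝ) ≤ 1)]
    rw [← fubini_aux u' hIoc]
    refine setIntegral_congr_fun measurableSet_Ioc fun y hy => ?_
    have h1 : F y = ∫ t in Ioc (0:ℝ) y, u' t :=
      intervalIntegral.integral_of_le hy.1.le
    have h2 : ∫ t in Ioc (0:ℝ) 1, (if t ≤ y then u' t else 0)
        = ∫ t in Ioc (0:ℝ) 1, (Iic y).indicator u' t := by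
      refine setIntegral_congr_fun measurableSet_Ioc fun t _ => ?_
      by_cases ht : t ≤ y
      · rw [if_pos ht, Set.indicator_of_mem (mem_Iic.mpr ht)]
      · rw [if_neg ht, Set.indicator_of_notMem (fun hc => ht (mem_Iic.mp hc))]
    have hset : Ioc (0:ℝ) 1 ∩ Iic y = Ioc 0 y := by
      ext z
      simp only [mem_inter_iff, mem_Ioc, mem_Iic]
      constructor
      · rintro ⟨⟨hz0, _⟩, hzy⟩; exact ⟨hz0, hzy⟩
      · rintro ⟨hz0, hzy⟩; exact ⟨⟨hz0, hzy.trans hy.2⟩, hzy⟩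
    rw [h1, h2, setIntegral_indicator measurableSet_Iic, hset]
  -- the kernel
  set k : ℝ → ℝ := fun t => (if t ≤ x then t else t - 1) - (x - 1/2) with hk
  have hkmeas : Measurable k := by
    apply Measurable.sub _ measurable_const
    exact Measurable.ite measurableSet_Iic measurable_id (measurable_id.sub measurable_const)
  have hkle : ∀ t : ℝ, t ≤ x → k t = t - (x - 1/2) := by
    intro t ht; rw [hk]; simp only [if_pos ht]
  have hkgt : ∀ t : ℝ, ¬ t ≤ x → k t = t - (x + 1/2) := by
    intro t ht; rw [hk]; simp only [if_neg ht]; ring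
  -- identity: u x - mean = ∫ k u'
  have htu' : IntervalIntegrable (fun t => t * u' t) volume 0 1 :=
    (hu'int 0 1).continuousOn_mul continuous_id.continuousOn
  have hIocu'01 : ∫ t in Ioc (0:ℝ) 1, u' t = 0 := by
    rw [← intervalIntegral.integral_of_le (by norm_num : (0:ℝ) ≤ 1)]
    exact hF1
  have hIocx1 : ∫ t in Ioc x 1, u' t = - F x := by
    rw [← intervalIntegral.integral_of_le hx1,
      ← intervalIntegral.integral_interval_sub_left (hu'int 0 1) (hu'int 0 x)]
    show F 1 - F x = - F x
    rw [hF1]; ring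
  have hident : u x - ∫ y in (0:ℝ)..1, u y = ∫ t in Ioc (0:ℝ) 1, k t * u' t := by
    have hsplit : ∀ t : ℝ, k t * u' t
        = t * u' t - (if t ≤ x then (0:ℝ) else 1) * u' t - (x - 1/2) * u' t := by
      intro t
      by_cases ht : t ≤ x
      · rw [hkle t ht]; simp [ht]; ring
      · rw [hkgt t ht]; simp [ht]; ring
    have hind : IntegrableOn (fun t => (if t ≤ x then (0:ℝ) else 1) * u' t) (Ioc (0:ℝ) 1) := by
      refine hIoc.norm.mono' ?_ ?_
      · apply AEStronglyMeasurable.mul _ hIoc.aestronglyMeasurable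
        exact (Measurable.ite measurableSet_Iic measurable_const measurable_const).aestronglyMeasurable
      · filter_upwards with t
        by_cases ht : t ≤ x <;> simp [ht]
    have htu'Ioc : IntegrableOn (fun t => t * u' t) (Ioc (0:ℝ) 1) := by
      have := htu'
      rwa [intervalIntegrable_iff_integrableOn_Ioc_of_le (by norm_num)] at this
    have hcu' : IntegrableOn (fun t => (x - 1/2) * u' t) (Ioc (0:ℝ) 1) :=
      hIoc.const_mul _
    have h1 : ∫ t in Ioc (0:ℝ) 1, k t * u' t
        = (∫ t in Ioc (0:ℝ) 1, t * u' t) - (∫ t in Ioc (0:ℝ) 1, (if t ≤ x then (0:ℝ) else 1) * u' t)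
          - (∫ t in Ioc (0:ℝ) 1, (x - 1/2) * u' t) := by
      have i1 : IntegrableOn
          (fun t => t * u' t - (if t ≤ x then (0:ℝ) else 1) * u' t) (Ioc (0:ℝ) 1) :=
        htu'Ioc.sub hind
      rw [setIntegral_congr_fun measurableSet_Ioc (fun t _ => hsplit t),
        integral_sub i1 hcu', integral_sub htu'Ioc hind]
    have h2 : ∫ t in Ioc (0:ℝ) 1, (if t ≤ x then (0:ℝ) else 1) * u' t = - F x := by
      have : ∫ t in Ioc (0:ℝ) 1, (if t ≤ x then (0:ℝ) else 1) * u' t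
          = ∫ t in Ioc (0:ℝ) 1, (Ioi x).indicator u' t := by
        refine setIntegral_congr_fun measurableSet_Ioc fun t _ => ?_
        by_cases ht : t ≤ x
        · simp [ht, Set.indicator_apply, not_lt.mpr ht]
        · simp [ht, Set.indicator_apply, lt_of_not_ge ht]
      rw [this, setIntegral_indicator measurableSet_Ioi]
      have : Ioc (0:ℝ) 1 ∩ Ioi x = Ioc x 1 := by
        ext z
        simp only [mem_inter_iff, mem_Ioc, mem_Ioi]
        constructor
        · rintro ⟨⟨_, hz1⟩, hz2⟩; exact ⟨hz2, hz1⟩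
        · rintro ⟨hz1, hz2⟩; exact ⟨⟨lt_of_le_of_lt hx0 hz1, hz2⟩, hz1⟩
      rw [this, hIocx1]
    have h3 : ∫ t in Ioc (0:ℝ) 1, (x - 1/2) * u' t = 0 := by
      rw [MeasureTheory.integral_const_mul, hIocu'01, mul_zero]
    rw [h1, h2, h3, sub_zero, sub_neg_eq_add]
    -- LHS
    have h4 : u x - ∫ y in (0:ℝ)..1, u y = F x - ∫ y in (0:ℝ)..1, F y := by
      rw [hmean, hFTC x]; ring
    rw [h4, hFub]
    have h5 : ∫ t in (0:ℝ)..1, (1 - t) * u' t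
        = (∫ t in (0:ℝ)..1, u' t) - ∫ t in (0:ℝ)..1, t * u' t := by
      rw [← intervalIntegral.integral_sub (hu'int 0 1) htu']
      apply intervalIntegral.integral_congr
      intro t _; ring
    rw [h5, show (∫ t in (0:ℝ)..1, u' t) = F 1 from rfl, hF1,
      intervalIntegral.integral_of_le (by norm_num : (0:ℝ) ≤ 1)]
    ring
  -- the L² norm of the kernel
  have hk2 : ∫ t in Ioc (0:ℝ) 1, (k t) ^ 2 = 1/12 := by
    have hdisj : Disjoint (Ioc (0:ℝ) x) (Ioc x 1) := Set.Ioc_disjoint_Ioc_of_le le_rfl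
    have hunion : Ioc (0:ℝ) x ∪ Ioc x 1 = Ioc 0 1 := Set.Ioc_union_Ioc_eq_Ioc hx0 hx1
    have hc1 : Continuous fun t : ℝ => (t - (x - 1/2)) ^ 2 :=
      (continuous_id.sub continuous_const).pow 2
    have hc2 : Continuous fun t : ℝ => (t - (x + 1/2)) ^ 2 :=
      (continuous_id.sub continuous_const).pow 2
    have hp1 : IntegrableOn (fun t => (k t) ^ 2) (Ioc (0:ℝ) x) := by
      apply hc1.integrableOn_Ioc.congr_fun ?_ measurableSet_Ioc
      intro t ht
      show (t - (x - 1/2)) ^ 2 = k t ^ 2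
      rw [hkle t ht.2]
    have hp2 : IntegrableOn (fun t => (k t) ^ 2) (Ioc x 1) := by
      apply hc2.integrableOn_Ioc.congr_fun ?_ measurableSet_Ioc
      intro t ht
      show (t - (x + 1/2)) ^ 2 = k t ^ 2
      rw [hkgt t (not_le.mpr ht.1)]
    have e1 : ∫ t in Ioc (0:ℝ) x, (k t) ^ 2 = ∫ t in Ioc (0:ℝ) x, (t - (x - 1/2)) ^ 2 := by
      refine setIntegral_congr_fun measurableSet_Ioc fun t ht => ?_
      show k t ^ 2 = (t - (x - 1/2)) ^ 2
      rw [hkle t ht.2]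
    have e2 : ∫ t in Ioc x 1, (k t) ^ 2 = ∫ t in Ioc x 1, (t - (x + 1/2)) ^ 2 := by
      refine setIntegral_congr_fun measurableSet_Ioc fun t ht => ?_
      show k t ^ 2 = (t - (x + 1/2)) ^ 2
      rw [hkgt t (not_le.mpr ht.1)]
    have poly : ∀ a b c : ℝ, a ≤ b → ∫ t in a..b, (t - c) ^ 2 = ((b - c)^3 - (a - c)^3) / 3 := by
      intro a b c _
      have : ∀ t : ℝ, HasDerivAt (fun s => (s - c)^3 / 3) ((t - c)^2) t := by
        intro t
        have h := ((hasDerivAt_pow 3 (t - c)).comp t ((hasDerivAt_id t).sub_const c)).div_const 3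
        refine h.congr_deriv ?_
        push_cast
        ring
      rw [intervalIntegral.integral_eq_sub_of_hasDerivAt (fun t _ => this t)
        (((continuous_id.sub continuous_const).pow 2).intervalIntegrable a b)]
      ring
    rw [← hunion, setIntegral_union hdisj measurableSet_Ioc hp1 hp2, e1, e2,
      ← intervalIntegral.integral_of_le hx0, ← intervalIntegral.integral_of_le hx1,
      poly 0 x _ hx0, poly x 1 _ hx1]
    ring_nf
  -- Cauchy-Schwarz
  set μ := volume.restrict (Ioc (0:ℝ) 1) with hμ
  haveI : IsFiniteMeasure μ := by
    constructor
    rw [hμ, Measure.restrict_apply_univ, Real.volume_Ioc]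
    norm_num
  have hkL2 : MemLp k (ENNReal.ofReal 2) μ := by
    have hbound : ∀ᵐ t ∂μ, ‖k t‖ ≤ 3/2 := by
      filter_upwards [ae_restrict_mem measurableSet_Ioc] with t ht
      have h1 : |if t ≤ x then t else t - 1| ≤ 1 := by
        by_cases h : t ≤ x
        · simp only [h, if_true]; rw [abs_le]; constructor <;> linarith [ht.1.le, ht.2]
        · simp only [h, if_false]; rw [abs_le]
          constructor <;> [linarith [ht.1.le, lt_of_not_ge h]; linarith [ht.2]]
      have h2 : |x - 1/2| ≤ 1/2 := by rw [abs_le]; constructor <;> linarith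
      calc ‖k t‖ = |(if t ≤ x then t else t - 1) - (x - 1/2)| := rfl
        _ ≤ |if t ≤ x then t else t - 1| + |x - 1/2| := abs_sub _ _
        _ ≤ 3/2 := by linarith
    exact (memLp_top_of_bound hkmeas.aestronglyMeasurable _ hbound).mono_exponent le_top
  have hu'L2 : MemLp u' (ENNReal.ofReal 2) μ := by
    have hsq : Integrable (fun t => (u' t) ^ 2) μ := by
      have := hu'sq 0 1
      rwa [intervalIntegrable_iff_integrableOn_Ioc_of_le (by norm_num)] at this
    have := (memLp_two_iff_integrable_sq hIoc.aestronglyMeasurable).mpr hsq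
    convert this using 2
    norm_num [ENNReal.ofReal_ofNat]
  have habs : ∀ a : ℝ, ‖a‖ ^ (2:ℝ) = a ^ 2 := by
    intro a
    rw [show (2:ℝ) = ((2:ℕ):ℝ) by norm_num, Real.rpow_natCast, Real.norm_eq_abs, sq_abs]
  have hCS : |∫ t in Ioc (0:ℝ) 1, k t * u' t|
      ≤ Real.sqrt (∫ t in Ioc (0:ℝ) 1, (k t)^2) * Real.sqrt (∫ t in Ioc (0:ℝ) 1, (u' t)^2) := by
    have hconj : Real.HolderConjugate 2 2 := Real.HolderConjugate.two_two
    have h0 := integral_mul_norm_le_Lp_mul_Lq (μ := μ) hconj hkL2 hu'L2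
    have step1 : |∫ t in Ioc (0:ℝ) 1, k t * u' t| ≤ ∫ t in Ioc (0:ℝ) 1, ‖k t‖ * ‖u' t‖ := by
      rw [← Real.norm_eq_abs]
      calc ‖∫ t in Ioc (0:ℝ) 1, k t * u' t‖ ≤ ∫ t in Ioc (0:ℝ) 1, ‖k t * u' t‖ :=
        norm_integral_le_integral_norm _
      _ = ∫ t in Ioc (0:ℝ) 1, ‖k t‖ * ‖u' t‖ := by
        refine setIntegral_congr_fun measurableSet_Ioc fun t _ => ?_
        exact norm_mul _ _
    refine step1.trans (h0.trans_eq ?_)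
    have ek : ∫ t, ‖k t‖ ^ (2:ℝ) ∂μ = ∫ t in Ioc (0:ℝ) 1, (k t) ^ 2 :=
      integral_congr_ae (Filter.Eventually.of_forall fun t => habs (k t))
    have eu : ∫ t, ‖u' t‖ ^ (2:ℝ) ∂μ = ∫ t in Ioc (0:ℝ) 1, (u' t) ^ 2 :=
      integral_congr_ae (Filter.Eventually.of_forall fun t => habs (u' t))
    rw [ek, eu, Real.sqrt_eq_rpow, Real.sqrt_eq_rpow]
  rw [hk2] at hCS
  have hsqrt12 : Real.sqrt (1/12) = Real.sqrt 3 / 6 := by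
    rw [show (1/12:ℝ) = (Real.sqrt 3 / 6)^2 by
      rw [div_pow, Real.sq_sqrt (by norm_num : (3:ℝ) ≥ 0)]; norm_num,
      Real.sqrt_sq (by positivity)]
  rw [hsqrt12] at hCS
  have hfin : |u x - ∫ y in (0:ℝ)..1, u y|
      ≤ Real.sqrt 3 / 6 * Real.sqrt (∫ y in (0:ℝ)..1, (u' y) ^ 2) := by
    rw [hident, intervalIntegral.integral_of_le (by norm_num : (0:ℝ) ≤ 1)]
    exact hCS
  have h := abs_add_le (∫ y in (0:ℝ)..1, u y) (u x - ∫ y in (0:ℝ)..1, u y)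
  have h2 : (∫ y in (0:ℝ)..1, u y) + (u x - ∫ y in (0:ℝ)..1, u y) = u x := by ring
  rw [h2] at h
  linarith [hfin, h]

/-- For `u ∈ H¹(S)` (absolutely continuous with weak derivative `u' ∈ L²`,
1-periodic), with mean `μ₀ = ∫_S u dx` and `μ₁ = (∫_S u'² dx)^{1/2}`, one has
`‖u‖_{L^∞(S)} ≤ |μ₀| + (√3/6) μ₁`. -/
theorem sup_norm_le_mean_add_deriv
    (u u' : ℝ → ℝ)
    (hper : Function.Periodic u 1)
    (hu'per : Function.Periodic u' 1)
    (hu'int : ∀ a b : ℝ, IntervalIntegrable u' volume a b)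
    (hu'sq : ∀ a b : ℝ, IntervalIntegrable (fun x => (u' x) ^ 2) volume a b)
    (hFTC : ∀ x : ℝ, u x = u 0 + ∫ t in (0:ℝ)..x, u' t) :
    ∀ x : ℝ, |u x| ≤ |∫ y in (0:ℝ)..1, u y|
      + Real.sqrt 3 / 6 * Real.sqrt (∫ y in (0:ℝ)..1, (u' y) ^ 2) := by
  intro x
  have hfract : u x = u (Int.fract x) := by
    have := hper.sub_int_mul_eq (x := x) ⌊x⌋
    rw [mul_one] at this
    rw [← this]; rfl
  rw [hfract]
  exact key_bound u u' hper hu'int hu'sq hFTC (Int.fract x)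
    ⟨Int.fract_nonneg x, (Int.fract_lt_one x).le⟩
end

section
/- For any smooth periodic solution (u, ρ) of the μ-Hunter–Saxton system ρ_t = (ρu)_x + 2γ₂ρ_x together with u_{tx} = -2μ₀u + (1/2)u_x² + u u_{xx} - (1/2)ρ² + γ₁u_{xx} + a(t), the quantity ∫_S (u_x² + ρ²) dx is conserved in time: d/dt ∫_S (u_x(t,x)² + ρ(t,x)²) dx = 0. -/
open MeasureTheory intervalIntegral

private lemma hasDerivAt_snd (f : ℝ × ℝ → ℝ) (hf : ContDiff ℝ (⊤ : ℕ∞) f) (t x : ℝ) :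
    HasDerivAt (fun y => f (t, y)) (fderiv ℝ f (t, x) (0, 1)) x := by
  have hg : HasDerivAt (fun y : ℝ => ((t, y) : ℝ × ℝ)) ((0 : ℝ), (1 : ℝ)) x :=
    (hasDerivAt_const x t).prodMk (hasDerivAt_id x)
  exact (hf.differentiable (by simp) (t, x)).hasFDerivAt.comp_hasDerivAt x hg

private lemma hasDerivAt_fst (f : ℝ × ℝ → ℝ) (hf : ContDiff ℝ (⊤ : ℕ∞) f) (t x : ℝ) :
    HasDerivAt (fun τ => f (τ, x)) (fderiv ℝ f (t, x) (1, 0)) t := by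
  have hg : HasDerivAt (fun τ : ℝ => ((τ, x) : ℝ × ℝ)) ((1 : ℝ), (0 : ℝ)) t :=
    (hasDerivAt_id t).prodMk (hasDerivAt_const t x)
  exact (hf.differentiable (by simp) (t, x)).hasFDerivAt.comp_hasDerivAt t hg

private lemma contDiff_fderiv_apply (f : ℝ × ℝ → ℝ) (hf : ContDiff ℝ (⊤ : ℕ∞) f) (v : ℝ × ℝ) :
    ContDiff ℝ (⊤ : ℕ∞) (fun p => fderiv ℝ f p v) :=
  (hf.fderiv_right (by simp)).clm_apply contDiff_const

/-- For any smooth 1-periodic (in `x`) solution `(u, ρ)` of the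
μ-Hunter–Saxton system `ρ_t = (ρu)_x + 2γ₂ρ_x` together with
`u_{tx} = -2μ₀ u + (1/2)u_x² + u u_{xx} - (1/2)ρ² + γ₁ u_{xx} + a(t)`,
the quantity `∫_S (u_x² + ρ²) dx` is conserved in time. -/
theorem energy_conserved
    (γ₁ γ₂ μ₀ : ℝ) (a : ℝ → ℝ)
    (u ρ : ℝ → ℝ → ℝ)
    (hu : ContDiff ℝ (⊤ : ℕ∞) (fun p : ℝ × ℝ => u p.1 p.2))
    (hρ : ContDiff ℝ (⊤ : ℕ∞) (fun p : ℝ × ℝ => ρ p.1 p.2))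
    (huper : ∀ t : ℝ, Function.Periodic (u t) 1)
    (hρper : ∀ t : ℝ, Function.Periodic (ρ t) 1)
    (hμ₀ : ∀ t : ℝ, (∫ x in (0:ℝ)..1, u t x) = μ₀)
    (heqρ : ∀ t x : ℝ, deriv (fun τ => ρ τ x) t
      = deriv (fun y => ρ t y * u t y) x + 2 * γ₂ * deriv (fun y => ρ t y) x)
    (hequ : ∀ t x : ℝ, deriv (fun τ => deriv (u τ) x) t
      = -2 * μ₀ * u t x + (1/2) * (deriv (u t) x) ^ 2 + u t x * deriv (deriv (u t)) x
        - (1/2) * (ρ t x) ^ 2 + γ₁ * deriv (deriv (u t)) x + a t) :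
    ∀ t : ℝ, deriv (fun τ => ∫ x in (0:ℝ)..1, ((deriv (u τ) x) ^ 2 + (ρ τ x) ^ 2)) t = 0 := by
  intro t
  -- abbreviations for the partial derivatives, as jointly smooth functions
  set U : ℝ × ℝ → ℝ := fun p => u p.1 p.2 with hUdef
  set R : ℝ × ℝ → ℝ := fun p => ρ p.1 p.2 with hRdef
  set ux : ℝ × ℝ → ℝ := fun p => fderiv ℝ U p (0, 1) with huxdef
  have huxC : ContDiff ℝ (⊤ : ℕ∞) ux := contDiff_fderiv_apply U hu _
  set uxx : ℝ × ℝ → ℝ := fun p => fderiv ℝ ux p (0, 1) with huxxdef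
  set uxt : ℝ × ℝ → ℝ := fun p => fderiv ℝ ux p (1, 0) with huxtdef
  set Rx : ℝ × ℝ → ℝ := fun p => fderiv ℝ R p (0, 1) with hRxdef
  set Rt : ℝ × ℝ → ℝ := fun p => fderiv ℝ R p (1, 0) with hRtdef
  -- basic derivative identifications
  have hux : ∀ s x : ℝ, HasDerivAt (u s) (ux (s, x)) x := fun s x =>
    hasDerivAt_snd U hu s x
  have hux' : ∀ s x : ℝ, deriv (u s) x = ux (s, x) := fun s x => (hux s x).deriv
  have huxfun : ∀ s : ℝ, deriv (u s) = fun x => ux (s, x) := fun s => funext (hux' s)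
  have huxx : ∀ s x : ℝ, HasDerivAt (fun y => ux (s, y)) (uxx (s, x)) x := fun s x =>
    hasDerivAt_snd ux huxC s x
  have huxx' : ∀ s x : ℝ, deriv (deriv (u s)) x = uxx (s, x) := by
    intro s x
    rw [huxfun s]
    exact (huxx s x).deriv
  have huxt : ∀ s x : ℝ, HasDerivAt (fun τ => ux (τ, x)) (uxt (s, x)) s := fun s x =>
    hasDerivAt_fst ux huxC s x
  have huxt' : ∀ s x : ℝ, deriv (fun τ => deriv (u τ) x) s = uxt (s, x) := by
    intro s x
    have h : (fun τ => deriv (u τ) x) = fun τ => ux (τ, x) := funext fun τ => hux' τ x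
    rw [h]
    exact (huxt s x).deriv
  have hRx : ∀ s x : ℝ, HasDerivAt (fun y => ρ s y) (Rx (s, x)) x := fun s x =>
    hasDerivAt_snd R hρ s x
  have hRt : ∀ s x : ℝ, HasDerivAt (fun τ => ρ τ x) (Rt (s, x)) s := fun s x =>
    hasDerivAt_fst R hρ s x
  -- the PDEs in terms of these functions
  have Eu : ∀ s x : ℝ, uxt (s, x)
      = -2 * μ₀ * u s x + (1/2) * (ux (s, x)) ^ 2 + u s x * uxx (s, x)
        - (1/2) * (ρ s x) ^ 2 + γ₁ * uxx (s, x) + a s := by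
    intro s x
    have h := hequ s x
    rwa [huxt' s x, hux' s x, huxx' s x] at h
  have Eρ : ∀ s x : ℝ, Rt (s, x)
      = (Rx (s, x) * u s x + ρ s x * ux (s, x)) + 2 * γ₂ * Rx (s, x) := by
    intro s x
    have h := heqρ s x
    rwa [(hRt s x).deriv, ((hRx s x).fun_mul (hux s x)).deriv, (hRx s x).deriv] at h
  -- the energy density and its time derivative
  set g : ℝ → ℝ → ℝ := fun τ x => (ux (τ, x)) ^ 2 + (ρ τ x) ^ 2 with hgdef
  set g' : ℝ → ℝ → ℝ := fun τ x => 2 * ux (τ, x) * uxt (τ, x) + 2 * ρ τ x * Rt (τ, x)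
    with hg'def
  have hg : ∀ τ x : ℝ, HasDerivAt (fun σ => g σ x) (g' τ x) τ := by
    intro τ x
    have h1 := (huxt τ x).fun_pow 2
    have h2 := (hRt τ x).fun_pow 2
    have h := h1.add h2
    refine h.congr_deriv ?_
    simp [hg'def]
  -- continuity of everything in sight
  have hUc : Continuous U := hu.continuous
  have hRc : Continuous R := hρ.continuous
  have huxc : Continuous ux := huxC.continuous
  have huxtc : Continuous uxt := (contDiff_fderiv_apply ux huxC _).continuous
  have hRtc : Continuous Rt := (contDiff_fderiv_apply R hρ _).continuous
  have hgc : Continuous (fun p : ℝ × ℝ => g p.1 p.2) := by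
    simp only [hgdef]
    exact (huxc.pow 2).add (hRc.pow 2)
  have hg'c : Continuous (fun p : ℝ × ℝ => g' p.1 p.2) := by
    simp only [hg'def]
    exact ((continuous_const.mul huxc).mul huxtc).add ((continuous_const.mul hRc).mul hRtc)
  have hgτc : ∀ τ : ℝ, Continuous (fun x => g τ x) := fun τ =>
    hgc.comp (Continuous.prodMk_right τ)
  have hg'τc : ∀ τ : ℝ, Continuous (fun x => g' τ x) := fun τ =>
    hg'c.comp (Continuous.prodMk_right τ)
  -- bound on g' on a compact neighbourhood
  obtain ⟨C, hC⟩ := (isCompact_Icc.prod isCompact_Icc).exists_bound_of_continuousOn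
    (s := Set.Icc (t - 1) (t + 1) ×ˢ Set.Icc (0:ℝ) 1) hg'c.continuousOn
  -- differentiate under the integral sign
  have key : HasDerivAt (fun τ => ∫ x in (0:ℝ)..1, g τ x) (∫ x in (0:ℝ)..1, g' t x) t := by
    have := (intervalIntegral.hasDerivAt_integral_of_dominated_loc_of_deriv_le
      (F := g) (F' := g') (x₀ := t) (a := (0:ℝ)) (b := 1) (bound := fun _ => C)
      (μ := volume) (s := Metric.ball t 1) (Metric.ball_mem_nhds t one_pos)
      (Filter.Eventually.of_forall fun τ => (hgτc τ).aestronglyMeasurable)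
      ((hgτc t).intervalIntegrable 0 1)
      ((hg'τc t).aestronglyMeasurable)
      ?_ (intervalIntegrable_const) ?_)
    · exact this.2
    · refine Filter.Eventually.of_forall fun x hx τ hτ => ?_
      refine hC (τ, x) ⟨?_, ?_⟩
      · rw [Real.ball_eq_Ioo] at hτ
        exact ⟨hτ.1.le, hτ.2.le⟩
      · rw [Set.uIoc_of_le (by norm_num : (0:ℝ) ≤ 1)] at hx
        exact ⟨hx.1.le, hx.2⟩
    · exact Filter.Eventually.of_forall fun x _ τ _ => hg τ x
  -- the spatial primitive of g' t
  set Ft : ℝ → ℝ := fun y => (-2 * μ₀) * (u t y) ^ 2 + u t y * (ux (t, y)) ^ 2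
    + (ρ t y) ^ 2 * u t y + γ₁ * (ux (t, y)) ^ 2 + (2 * a t) * u t y
    + (2 * γ₂) * (ρ t y) ^ 2 with hFtdef
  have hFt : ∀ x : ℝ, HasDerivAt Ft (g' t x) x := by
    intro x
    have h1 := ((hux t x).pow 2).const_mul (-2 * μ₀)
    have h2 := (hux t x).mul ((huxx t x).pow 2)
    have h3 := ((hRx t x).pow 2).mul (hux t x)
    have h4 := ((huxx t x).pow 2).const_mul γ₁
    have h5 := (hux t x).const_mul (2 * a t)
    have h6 := ((hRx t x).pow 2).const_mul (2 * γ₂)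
    have h := ((((h1.add h2).add h3).add h4).add h5).add h6
    refine h.congr_deriv ?_
    simp only [hg'def, Pi.pow_apply]
    rw [Eu t x, Eρ t x]
    ring
  -- periodicity of the primitive
  have hper_ux : ux (t, 1) = ux (t, 0) := by
    have hshift : (fun y => u t (y + 1)) = u t := funext fun y => huper t y
    have h1 : HasDerivAt (fun y => u t (y + 1)) (ux (t, 1)) 0 :=
      HasDerivAt.comp_add_const 0 1 (by rw [zero_add]; exact hux t 1)
    rw [hshift] at h1
    exact h1.unique (hux t 0)
  have hFt_per : Ft 1 = Ft 0 := by
    have h1 : u t 1 = u t 0 := by simpa using huper t 0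
    have h2 : ρ t 1 = ρ t 0 := by simpa using hρper t 0
    simp only [hFtdef, h1, h2, hper_ux]
  -- the integral of g' t vanishes
  have hzero : (∫ x in (0:ℝ)..1, g' t x) = 0 := by
    rw [intervalIntegral.integral_eq_sub_of_hasDerivAt
      (fun x _ => hFt x) ((hg'τc t).intervalIntegrable 0 1), hFt_per, sub_self]
  -- conclude
  have hfun : (fun τ => ∫ x in (0:ℝ)..1, ((deriv (u τ) x) ^ 2 + (ρ τ x) ^ 2))
      = fun τ => ∫ x in (0:ℝ)..1, g τ x := by
    funext τ
    congr 1
    funext x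
    rw [hux' τ x]
  rw [hfun, key.deriv, hzero]
end

section
/- Let C, L > 0, and let T < min{1/(4CL), 1/(2C)}. Suppose a sequence of continuous functions l^n : [0,T] → [0,∞) satisfies l⁰ ≡ 0 and, for all n, l^{n+1}(t) ≤ e^{C∫₀^t l^n(τ)dτ}(L + (C/2)∫₀^t e^{-C∫₀^τ l^n dτ'} l^n(τ)(l^n(τ)+1) dτ). Then l^n(t) ≤ 2L/(1 - 4CLt) for all n and all t ∈ [0,T]. -/
open MeasureTheory Set intervalIntegral

private lemma exp_half_log {p : ℝ} (hp : 0 < p) :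
    Real.exp (Real.log p / 2) = Real.sqrt p := by
  rw [Real.sqrt_eq_rpow, Real.rpow_def_of_pos hp]
  ring_nf

private lemma hasDerivAt_inner (a s : ℝ) :
    HasDerivAt (fun s : ℝ => 1 - a * s) (-a) s := by
  simpa using ((hasDerivAt_id s).const_mul a).const_sub 1

set_option maxHeartbeats 1600000 in
/-- (Uniform bound for the approximate solutions) Let `C, L > 0` and
`T < min{1/(4CL), 1/(2C)}`. If continuous `lⁿ : [0,T] → [0,∞)` satisfy `l⁰ ≡ 0` and
`l^{n+1}(t) ≤ e^{C∫₀ᵗ lⁿ}(L + (C/2)∫₀ᵗ e^{-C∫₀^τ lⁿ} lⁿ(τ)(lⁿ(τ)+1) dτ)`, then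
`lⁿ(t) ≤ 2L/(1 - 4CLt)` for all `n` and `t ∈ [0,T]`. -/
theorem approximate_solutions_uniform_bound
    (C L T : ℝ) (hC : 0 < C) (hL : 0 < L) (hT0 : 0 ≤ T)
    (hT : T < min (1 / (4 * C * L)) (1 / (2 * C)))
    (l : ℕ → ℝ → ℝ)
    (hcont : ∀ n, ContinuousOn (l n) (Icc 0 T))
    (hpos : ∀ n, ∀ t ∈ Icc 0 T, 0 ≤ l n t)
    (h0 : ∀ t : ℝ, l 0 t = 0)
    (hrec : ∀ n, ∀ t ∈ Icc 0 T,
      l (n + 1) t ≤ Real.exp (C * ∫ τ in (0:ℝ)..t, l n τ)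
        * (L + C / 2 * ∫ τ in (0:ℝ)..t,
            Real.exp (-(C * ∫ τ' in (0:ℝ)..τ, l n τ')) * (l n τ * (l n τ + 1)))) :
    ∀ n, ∀ t ∈ Icc 0 T, l n t ≤ 2 * L / (1 - 4 * C * L * t) := by
  have hCL : (0:ℝ) < 4 * C * L := by positivity
  have hT1 : T * (4 * C * L) < 1 := by
    have := lt_of_le_of_lt (le_refl T) (lt_of_lt_of_le hT (min_le_left _ _))
    calc T * (4 * C * L) < 1 / (4 * C * L) * (4 * C * L) := by
          exact mul_lt_mul_of_pos_right this hCL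
      _ = 1 := by field_simp
  have hT2 : T * (2 * C) < 1 := by
    have h := lt_of_lt_of_le hT (min_le_right _ _)
    calc T * (2 * C) < 1 / (2 * C) * (2 * C) := by
          exact mul_lt_mul_of_pos_right h (by positivity)
      _ = 1 := by field_simp
  -- positivity of 1 - 4CLt on [0,T]
  have hxpos : ∀ t ∈ Icc (0:ℝ) T, 0 < 1 - 4 * C * L * t := by
    intro t ht
    have : 4 * C * L * t ≤ 4 * C * L * T := by
      exact mul_le_mul_of_nonneg_left ht.2 (le_of_lt hCL)
    nlinarith [hT1]
  intro n
  induction n with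
  | zero =>
    intro t ht
    rw [h0]
    have := hxpos t ht
    positivity
  | succ n IH =>
    intro t ht
    obtain ⟨ht0, htT⟩ := ht
    have hItT : Icc (0:ℝ) t ⊆ Icc 0 T := Icc_subset_Icc le_rfl htT
    set a : ℝ := 4 * C * L with ha
    set x : ℝ := 1 - a * t with hxdef
    have hx0 : 0 < x := hxpos t ⟨ht0, htT⟩
    have hx1 : x ≤ 1 := by
      have : 0 ≤ a * t := by positivity
      simp only [hxdef]; linarith
    have hupos : ∀ s ∈ Icc (0:ℝ) t, 0 < 1 - a * s := fun s hs =>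
      hxpos s (hItT hs)
    -- integrability of l n on subintervals
    have hlint : ∀ τ₁ ∈ Icc (0:ℝ) t, ∀ τ₂ ∈ Icc (0:ℝ) t,
        IntervalIntegrable (l n) volume τ₁ τ₂ := by
      intro τ₁ h1 τ₂ h2
      apply ContinuousOn.intervalIntegrable
      exact (hcont n).mono (fun s hs => hItT (by
        rcases le_total τ₁ τ₂ with h | h
        · rw [uIcc_of_le h] at hs; exact ⟨le_trans h1.1 hs.1, le_trans hs.2 h2.2⟩
        · rw [uIcc_of_ge h] at hs; exact ⟨le_trans h2.1 hs.1, le_trans hs.2 h1.2⟩))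
    set A : ℝ → ℝ := fun τ => C * ∫ s in (0:ℝ)..τ, l n s with hA
    -- continuity of A on [0,t]
    have hAcont : ContinuousOn A (Icc 0 t) := by
      have hInt : IntegrableOn (l n) (uIcc 0 t) volume := by
        rw [uIcc_of_le ht0]
        exact ((hcont n).mono hItT).integrableOn_Icc
      have hcp := intervalIntegral.continuousOn_primitive_interval hInt
      rw [uIcc_of_le ht0] at hcp
      exact continuousOn_const.mul hcp
    -- Step B: key integral estimate
    have stepB : ∀ τ ∈ Icc (0:ℝ) t,
        A t - A τ ≤ (Real.log (1 - a * τ) - Real.log x) / 2 := by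
      intro τ hτ
      obtain ⟨hτ0, hτt⟩ := hτ
      have h1 : IntervalIntegrable (l n) volume 0 τ :=
        hlint 0 ⟨le_rfl, ht0⟩ τ ⟨hτ0, hτt⟩
      have h2 : IntervalIntegrable (l n) volume τ t :=
        hlint τ ⟨hτ0, hτt⟩ t ⟨ht0, le_rfl⟩
      have hsplit : (∫ s in (0:ℝ)..τ, l n s) + ∫ s in τ..t, l n s
          = ∫ s in (0:ℝ)..t, l n s :=
        intervalIntegral.integral_add_adjacent_intervals h1 h2
      have hAt : A t - A τ = C * ∫ s in τ..t, l n s := by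
        simp only [hA]
        rw [← hsplit]; ring
      have huIcc : uIcc τ t ⊆ Icc (0:ℝ) t := by
        rw [uIcc_of_le hτt]; exact Icc_subset_Icc hτ0 le_rfl
      have hMint : IntervalIntegrable (fun s : ℝ => 2 * L / (1 - a * s)) volume τ t := by
        apply ContinuousOn.intervalIntegrable
        exact continuousOn_const.div (by continuity : Continuous fun s : ℝ => 1 - a * s).continuousOn
          (fun s hs => ne_of_gt (hupos s (huIcc hs)))
      have hM : (∫ s in τ..t, l n s) ≤ ∫ s in τ..t, 2 * L / (1 - a * s) := by
        apply intervalIntegral.integral_mono_on hτt h2 hMint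
        intro s hs
        exact IH s (hItT ⟨le_trans hτ0 hs.1, hs.2⟩)
      have hcomp : (∫ s in τ..t, 2 * L / (1 - a * s))
          = (-(1/(2*C)) * Real.log (1 - a * t)) - (-(1/(2*C)) * Real.log (1 - a * τ)) := by
        apply intervalIntegral.integral_eq_sub_of_hasDerivAt
        · intro s hs
          have hu := hupos s (huIcc hs)
          have hlog := (Real.hasDerivAt_log (ne_of_gt hu)).comp s (hasDerivAt_inner a s)
          have hD := hlog.const_mul (-(1/(2*C)))
          convert hD using 1
          case e'_4 => rfl
          case e'_8 => rfl
          rw [ha]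
          field_simp
          ring
        · exact hMint
      have hxx : Real.log (1 - a * t) = Real.log x := by rw [← hxdef]
      rw [hAt, hxx] at *
      calc C * ∫ s in τ..t, l n s ≤ C * ∫ s in τ..t, 2 * L / (1 - a * s) :=
            mul_le_mul_of_nonneg_left hM (le_of_lt hC)
        _ = (Real.log (1 - a * τ) - Real.log x) / 2 := by
            rw [hcomp]; field_simp; ring
    -- Step B': exponential form
    have stepB' : ∀ τ ∈ Icc (0:ℝ) t,
        Real.exp (A t - A τ) ≤ Real.sqrt (1 - a * τ) / Real.sqrt x := by
      intro τ hτ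
      have h1 := stepB τ hτ
      have hu := hupos τ hτ
      calc Real.exp (A t - A τ)
          ≤ Real.exp ((Real.log (1 - a * τ) - Real.log x) / 2) := Real.exp_le_exp.mpr h1
        _ = Real.exp (Real.log (1 - a * τ) / 2) / Real.exp (Real.log x / 2) := by
            rw [← Real.exp_sub]; ring_nf
        _ = Real.sqrt (1 - a * τ) / Real.sqrt x := by
            rw [exp_half_log hu, exp_half_log hx0]
    -- the comparison function
    set h : ℝ → ℝ := fun τ => Real.sqrt (1 - a * τ) / Real.sqrt x *
        (2 * L / (1 - a * τ) * (2 * L / (1 - a * τ) + 1)) with hh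
    -- pointwise bound
    have stepC : ∀ τ ∈ Icc (0:ℝ) t,
        Real.exp (A t - A τ) * (l n τ * (l n τ + 1)) ≤ h τ := by
      intro τ hτ
      have hu := hupos τ hτ
      have hln := hpos n τ (hItT hτ)
      have hIH := IH τ (hItT hτ)
      have h1 : l n τ * (l n τ + 1) ≤ 2 * L / (1 - a * τ) * (2 * L / (1 - a * τ) + 1) := by
        have : l n τ ≤ 2 * L / (1 - a * τ) := hIH
        nlinarith
      have h2 := stepB' τ hτ
      have hge : (0:ℝ) ≤ Real.sqrt (1 - a * τ) / Real.sqrt x := by positivity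
      calc Real.exp (A t - A τ) * (l n τ * (l n τ + 1))
          ≤ (Real.sqrt (1 - a * τ) / Real.sqrt x) * (l n τ * (l n τ + 1)) := by
            apply mul_le_mul_of_nonneg_right h2; nlinarith
        _ ≤ h τ := by
            apply mul_le_mul_of_nonneg_left h1 hge
    -- continuity of h
    have hhcont : ContinuousOn h (Icc 0 t) := by
      have hin : Continuous (fun s : ℝ => 1 - a * s) := by continuity
      have h1 : ContinuousOn (fun τ : ℝ => Real.sqrt (1 - a * τ)) (Icc 0 t) :=
        (Real.continuous_sqrt.comp hin).continuousOn
      have h2 : ContinuousOn (fun τ : ℝ => 2 * L / (1 - a * τ)) (Icc 0 t) :=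
        continuousOn_const.div hin.continuousOn (fun s hs => ne_of_gt (hupos s hs))
      exact (h1.div_const _).mul (h2.mul (h2.add continuousOn_const))
    -- antiderivative computation
    have stepD : C / 2 * ∫ τ in (0:ℝ)..t, h τ
        = (1 / Real.sqrt x) * (L / Real.sqrt x - Real.sqrt x / 2)
          - (1 / Real.sqrt x) * (L - 1 / 2) := by
      set G : ℝ → ℝ := fun s =>
        (1 / Real.sqrt x) * (L / Real.sqrt (1 - a * s) - Real.sqrt (1 - a * s) / 2) with hG
      have key : (∫ τ in (0:ℝ)..t, C / 2 * h τ) = G t - G 0 := by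
        apply intervalIntegral.integral_eq_sub_of_hasDerivAt
        · intro s hs
          rw [uIcc_of_le ht0] at hs
          have hu := hupos s hs
          have hsu : 0 < Real.sqrt (1 - a * s) := Real.sqrt_pos.mpr hu
          have d1 : HasDerivAt (fun s : ℝ => Real.sqrt (1 - a * s))
              (1 / (2 * Real.sqrt (1 - a * s)) * (-a)) s :=
            (Real.hasDerivAt_sqrt (ne_of_gt hu)).comp s (hasDerivAt_inner a s)
          have d2 : HasDerivAt (fun s : ℝ => L / Real.sqrt (1 - a * s))
              ((0 * Real.sqrt (1 - a * s) - L * (1 / (2 * Real.sqrt (1 - a * s)) * (-a)))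
                / (Real.sqrt (1 - a * s)) ^ 2) s :=
            (hasDerivAt_const s L).div d1 (ne_of_gt hsu)
          have hD := (d2.sub (d1.div_const 2)).const_mul (1 / Real.sqrt x)
          convert hD using 1
          case e'_4 => rfl
          case e'_8 => rfl
          simp only [hh]
          set r : ℝ := Real.sqrt (1 - a * s) with hr
          have hsq : r * r = 1 - a * s := Real.mul_self_sqrt (le_of_lt hu)
          rw [← hsq, ha]
          have hr0 : r ≠ 0 := ne_of_gt hsu
          have hsx : Real.sqrt x ≠ 0 := ne_of_gt (Real.sqrt_pos.mpr hx0)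
          field_simp
          ring
        · apply ContinuousOn.intervalIntegrable
          rw [uIcc_of_le ht0]
          exact continuousOn_const.mul hhcont
      rw [← intervalIntegral.integral_const_mul, key, hG]
      simp only [mul_zero, sub_zero, Real.sqrt_one]
      rw [← hxdef]
      norm_num
    -- main chain
    have hmain := hrec n t ⟨ht0, htT⟩
    have hFcont : ContinuousOn (fun τ => Real.exp (A t - A τ) * (l n τ * (l n τ + 1))) (Icc 0 t) := by
      apply ContinuousOn.mul
      · exact (Real.continuous_exp.comp_continuousOn (continuousOn_const.sub hAcont))
      · exact ((hcont n).mono hItT).mul (((hcont n).mono hItT).add continuousOn_const)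
    have hint1 : IntervalIntegrable (fun τ => Real.exp (A t - A τ) * (l n τ * (l n τ + 1))) volume 0 t := by
      apply ContinuousOn.intervalIntegrable
      rwa [uIcc_of_le ht0]
    have hint2 : IntervalIntegrable h volume 0 t := by
      apply ContinuousOn.intervalIntegrable
      rwa [uIcc_of_le ht0]
    have hmono : ∫ τ in (0:ℝ)..t, Real.exp (A t - A τ) * (l n τ * (l n τ + 1))
        ≤ ∫ τ in (0:ℝ)..t, h τ :=
      intervalIntegral.integral_mono_on ht0 hint1 hint2 stepC
    -- rewrite hrec RHS
    have hrw : Real.exp (A t) * (L + C / 2 * ∫ τ in (0:ℝ)..t,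
          Real.exp (-(A τ)) * (l n τ * (l n τ + 1)))
        = Real.exp (A t) * L + C / 2 * ∫ τ in (0:ℝ)..t,
            Real.exp (A t - A τ) * (l n τ * (l n τ + 1)) := by
      rw [mul_add]
      congr 1
      rw [show Real.exp (A t) * (C / 2 * ∫ τ in (0:ℝ)..t,
            Real.exp (-(A τ)) * (l n τ * (l n τ + 1)))
          = C / 2 * (Real.exp (A t) * ∫ τ in (0:ℝ)..t,
            Real.exp (-(A τ)) * (l n τ * (l n τ + 1))) from by ring]
      congr 1
      rw [← intervalIntegral.integral_const_mul]
      apply intervalIntegral.integral_congr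
      intro τ _
      simp only [Real.exp_sub, Real.exp_neg, div_eq_mul_inv]
      ring
    -- first term bound
    have hterm1 : Real.exp (A t) * L ≤ L / Real.sqrt x := by
      have h0A : A (0:ℝ) = 0 := by simp [hA]
      have := stepB' 0 ⟨le_rfl, ht0⟩
      rw [h0A, sub_zero] at this
      simp only [mul_zero, sub_zero, Real.sqrt_one] at this
      calc Real.exp (A t) * L ≤ (1 / Real.sqrt x) * L := by
            apply mul_le_mul_of_nonneg_right this (le_of_lt hL)
        _ = L / Real.sqrt x := by ring
    -- put things together
    have hchain : l (n + 1) t ≤ L / Real.sqrt x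
        + ((1 / Real.sqrt x) * (L / Real.sqrt x - Real.sqrt x / 2)
          - (1 / Real.sqrt x) * (L - 1 / 2)) := by
      calc l (n + 1) t
          ≤ Real.exp (A t) * (L + C / 2 * ∫ τ in (0:ℝ)..t,
              Real.exp (-(A τ)) * (l n τ * (l n τ + 1))) := hmain
        _ = Real.exp (A t) * L + C / 2 * ∫ τ in (0:ℝ)..t,
              Real.exp (A t - A τ) * (l n τ * (l n τ + 1)) := hrw
        _ ≤ L / Real.sqrt x + C / 2 * ∫ τ in (0:ℝ)..t, h τ := by
            apply add_le_add hterm1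
            apply mul_le_mul_of_nonneg_left hmono (by positivity)
        _ = _ := by rw [stepD]
    -- final algebra
    set s : ℝ := Real.sqrt x with hs
    have hs0 : 0 < s := Real.sqrt_pos.mpr hx0
    have hs2 : s * s = x := Real.mul_self_sqrt (le_of_lt hx0)
    have hs1 : s ≤ 1 := by
      rw [hs, show (1:ℝ) = Real.sqrt 1 from (Real.sqrt_one).symm]
      exact Real.sqrt_le_sqrt hx1
    have hat : 1 - x ≤ 2 * L := by
      have h1 : a * t ≤ a * T := mul_le_mul_of_nonneg_left htT (le_of_lt hCL)
      have h2 : a * T < 2 * L := by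
        have : T * (2 * C) * L < L := by nlinarith [hT2]
        rw [ha]; nlinarith
      simp only [hxdef]; linarith
    have hfin : L / s + ((1 / s) * (L / s - s / 2) - (1 / s) * (L - 1 / 2)) ≤ 2 * L / x := by
      rw [← hs2]
      have e1 : L / s + ((1 / s) * (L / s - s / 2) - (1 / s) * (L - 1 / 2))
          = (2 * L + s - s * s) / (2 * (s * s)) := by
        field_simp
        ring
      rw [e1, div_le_div_iff₀ (by positivity) (by positivity)]
      have hsx : s - s * s ≤ 2 * L := by linarith [hs2, hs1, hat]
      nlinarith [hsx, mul_pos hs0 hs0]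
    exact le_trans hchain hfin
end

section
/- Let C_T > 0 and T > 0, and suppose nonnegative continuous functions h^m_n : [0,T] → [0,∞), indexed by n, m ∈ N, satisfy h^m_0 bounded by C_T and, for all n, h^m_{n+1}(t) ≤ C_T(2^{-n} + ∫₀^t h^m_n(τ) dτ + ε^m_{n+1}) where ε^m_n ≥ 0. Then for all n, h^m_{n+1}(t) ≤ C_T(2^{-n}Σ_{k=0}^n (2TC_T)^k/k! + (TC_T)^{n+1}/(n+1)! + Σ_{k=0}^n ε^m_{n-k+1}(C_T T)^k/k!) for all t ∈ [0,T]. -/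
open MeasureTheory Set

private lemma hint1 (c : ℝ) (k : ℕ) (t : ℝ) :
    ∫ τ in (0:ℝ)..t, (c * τ) ^ k / (Nat.factorial k)
      = c ^ k * t ^ (k+1) / ((k+1) * Nat.factorial k) := by
  have : (fun τ : ℝ => (c * τ) ^ k / (Nat.factorial k))
      = fun τ : ℝ => (c ^ k / (Nat.factorial k)) * τ ^ k := by
    funext τ; rw [mul_pow]; ring
  rw [this, intervalIntegral.integral_const_mul, integral_pow,
    zero_pow (Nat.succ_ne_zero k), sub_zero]
  rw [div_mul_div_comm, mul_comm ((Nat.factorial k : ℝ))]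

/-- (Cauchy-sequence iteration estimate) Let `C_T, T > 0`. Suppose
nonnegative continuous `h^m_n : [0,T] → [0,∞)` satisfy `h^m_0 ≤ C_T` and
`h^m_{n+1}(t) ≤ C_T(2^{-n} + ∫₀ᵗ h^m_n(τ)dτ + ε^m_{n+1})` with `ε^m_n ≥ 0`. Then
`h^m_{n+1}(t) ≤ C_T(2^{-n}∑_{k=0}^n (2TC_T)^k/k! + (TC_T)^{n+1}/(n+1)!
  + ∑_{k=0}^n ε^m_{n-k+1}(C_T T)^k/k!)` for all `n, m` and `t ∈ [0,T]`. -/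
theorem cauchy_iteration_estimate (CT T : ℝ) (hCT : 0 < CT) (hT : 0 < T)
    (h : ℕ → ℕ → ℝ → ℝ) (ε : ℕ → ℕ → ℝ)
    (hcont : ∀ n m, ContinuousOn (h n m) (Icc 0 T))
    (hpos : ∀ n m, ∀ t ∈ Icc 0 T, 0 ≤ h n m t)
    (hεpos : ∀ n m, 0 ≤ ε n m)
    (h0 : ∀ m, ∀ t ∈ Icc 0 T, h 0 m t ≤ CT)
    (hrec : ∀ n m, ∀ t ∈ Icc 0 T,
      h (n + 1) m t ≤ CT * ((2:ℝ) ^ (-(n:ℝ)) + (∫ τ in (0:ℝ)..t, h n m τ) + ε (n + 1) m)) :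
    ∀ n m, ∀ t ∈ Icc 0 T,
      h (n + 1) m t ≤ CT *
        ((2:ℝ) ^ (-(n:ℝ)) * ∑ k ∈ Finset.range (n + 1), (2 * T * CT) ^ k / (Nat.factorial k)
          + (T * CT) ^ (n + 1) / (Nat.factorial (n + 1))
          + ∑ k ∈ Finset.range (n + 1), ε (n - k + 1) m * (CT * T) ^ k / (Nat.factorial k)) := by
  suffices H : ∀ n m, ∀ t ∈ Icc (0:ℝ) T,
      h (n + 1) m t ≤ CT *
        ((2:ℝ) ^ (-(n:ℝ)) * ∑ k ∈ Finset.range (n + 1), (2 * CT * t) ^ k / (Nat.factorial k)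
          + (CT * t) ^ (n + 1) / (Nat.factorial (n + 1))
          + ∑ k ∈ Finset.range (n + 1), ε (n - k + 1) m * (CT * t) ^ k / (Nat.factorial k)) by
    intro n m t ht
    obtain ⟨ht0, htT⟩ := ht
    refine (H n m t ⟨ht0, htT⟩).trans ?_
    have e1 : (2 * T * CT : ℝ) = 2 * CT * T := by ring
    have e2 : (T * CT : ℝ) = CT * T := by ring
    rw [e1, e2]
    have h2n : (0:ℝ) ≤ (2:ℝ) ^ (-(n:ℝ)) := by positivity
    gcongr with k hk k hk
    · exact hεpos _ m
  intro n m
  induction n with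
  | zero =>
    intro t ht
    obtain ⟨ht0, htT⟩ := ht
    have hsub : uIcc (0:ℝ) t ⊆ Icc 0 T := by
      rw [uIcc_of_le ht0]
      exact Icc_subset_Icc le_rfl htT
    have hI : (∫ τ in (0:ℝ)..t, h 0 m τ) ≤ ∫ τ in (0:ℝ)..t, CT := by
      apply intervalIntegral.integral_mono_on ht0
      · exact ((hcont 0 m).mono hsub).intervalIntegrable
      · exact intervalIntegrable_const
      · intro τ hτ
        exact h0 m τ (hsub (by rw [uIcc_of_le ht0]; exact hτ))
    have hI' : (∫ τ in (0:ℝ)..t, h 0 m τ) ≤ CT * t := by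
      calc (∫ τ in (0:ℝ)..t, h 0 m τ) ≤ ∫ τ in (0:ℝ)..t, CT := hI
      _ = CT * t := by simp [mul_comm]
    refine (hrec 0 m t ⟨ht0, htT⟩).trans ?_
    simp only [Finset.sum_range_one, pow_zero, pow_one, Nat.factorial]
    norm_num
    nlinarith [hCT.le]
  | succ n ih =>
    intro t ht
    obtain ⟨ht0, htT⟩ := ht
    have hsub : uIcc (0:ℝ) t ⊆ Icc 0 T := by
      rw [uIcc_of_le ht0]
      exact Icc_subset_Icc le_rfl htT
    set g : ℝ → ℝ := fun τ =>
        ((2:ℝ) ^ (-(n:ℝ)) * ∑ k ∈ Finset.range (n + 1), (2 * CT * τ) ^ k / (Nat.factorial k)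
          + (CT * τ) ^ (n + 1) / (Nat.factorial (n + 1))
          + ∑ k ∈ Finset.range (n + 1), ε (n - k + 1) m * (CT * τ) ^ k / (Nat.factorial k)) with hg
    have hgc : Continuous g := by
      rw [hg]; fun_prop
    have hI : (∫ τ in (0:ℝ)..t, h (n+1) m τ) ≤ ∫ τ in (0:ℝ)..t, CT * g τ := by
      apply intervalIntegral.integral_mono_on ht0
      · exact ((hcont (n+1) m).mono hsub).intervalIntegrable
      · exact ((continuous_const.mul hgc)).intervalIntegrable 0 t
      · intro τ hτ
        exact ih τ (hsub (by rw [uIcc_of_le ht0]; exact hτ))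
    -- compute the integral of CT * g
    have hgval : (∫ τ in (0:ℝ)..t, CT * g τ)
        = CT * ((2:ℝ) ^ (-(n:ℝ)) * ∑ k ∈ Finset.range (n + 1),
              (2*CT)^k * t^(k+1) / ((k+1) * Nat.factorial k)
            + CT^(n+1) * t^(n+1+1) / ((((n+1 : ℕ) : ℝ) + 1) * (Nat.factorial (n+1) : ℝ))
            + ∑ k ∈ Finset.range (n + 1),
              ε (n - k + 1) m * (CT^k * t^(k+1) / ((k+1) * Nat.factorial k))) := by
      rw [intervalIntegral.integral_const_mul]
      congr 1
      rw [hg]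
      have i1 : IntervalIntegrable (fun τ : ℝ => (2:ℝ) ^ (-(n:ℝ)) *
          ∑ k ∈ Finset.range (n + 1), (2 * CT * τ) ^ k / (Nat.factorial k)) volume 0 t := by
        apply Continuous.intervalIntegrable; fun_prop
      have i2 : IntervalIntegrable (fun τ : ℝ => (CT * τ) ^ (n + 1) / (Nat.factorial (n + 1)))
          volume 0 t := by
        apply Continuous.intervalIntegrable; fun_prop
      have i3 : IntervalIntegrable (fun τ : ℝ =>
          ∑ k ∈ Finset.range (n + 1), ε (n - k + 1) m * (CT * τ) ^ k / (Nat.factorial k))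
          volume 0 t := by
        apply Continuous.intervalIntegrable; fun_prop
      rw [intervalIntegral.integral_add (i1.add i2) i3, intervalIntegral.integral_add i1 i2]
      congr 1
      congr 1
      · rw [intervalIntegral.integral_const_mul]
        congr 1
        rw [intervalIntegral.integral_finset_sum]
        · exact Finset.sum_congr rfl fun k _ => hint1 (2*CT) k t
        · intro k _
          apply Continuous.intervalIntegrable; fun_prop
      · exact hint1 CT (n+1) t
      · rw [intervalIntegral.integral_finset_sum]
        · refine Finset.sum_congr rfl fun k _ => ?_
          have : (fun τ : ℝ => ε (n - k + 1) m * (CT * τ) ^ k / (Nat.factorial k))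
              = fun τ : ℝ => ε (n - k + 1) m * ((CT * τ) ^ k / (Nat.factorial k)) := by
            funext τ; ring
          rw [this, intervalIntegral.integral_const_mul, hint1 CT k t]
        · intro k _
          apply Continuous.intervalIntegrable; fun_prop
    refine (hrec (n+1) m t ⟨ht0, htT⟩).trans ?_
    have hcast : (-(((n+1 : ℕ) : ℝ))) = -((n:ℝ)+1) := by push_cast; ring
    apply le_of_le_of_eq (b := CT * (((2:ℝ) ^ (-(((n+1:ℕ)):ℝ))
        + (∫ τ in (0:ℝ)..t, CT * g τ)) + ε (n + 1 + 1) m))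
    · gcongr
    rw [hgval]
    have h2 : (2:ℝ) ^ (-(n:ℝ)) = 2 * (2:ℝ) ^ (-((n:ℝ)+1)) := by
      rw [show -((n:ℝ)+1) = -(n:ℝ) + (-1) by ring, Real.rpow_add (by norm_num),
        Real.rpow_neg_one]
      ring
    have key1 : CT * (2 * (2:ℝ) ^ (-((n:ℝ)+1)) *
          ∑ k ∈ Finset.range (n + 1), (2*CT)^k * t^(k+1) / ((k+1) * Nat.factorial k))
        = (2:ℝ) ^ (-((n:ℝ)+1)) *
          ∑ k ∈ Finset.range (n + 1), (2 * CT * t) ^ (k+1) / (Nat.factorial (k+1) : ℝ) := by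
      simp only [Finset.mul_sum]
      refine Finset.sum_congr rfl fun k _ => ?_
      have hk : ((k:ℝ)+1) ≠ 0 := by positivity
      have hf : ((Nat.factorial k : ℝ)) ≠ 0 := by positivity
      rw [Nat.factorial_succ]
      push_cast
      field_simp
      ring
    have keyB : CT * (CT^(n+1) * t^(n+1+1) / ((((n+1 : ℕ) : ℝ) + 1) * (Nat.factorial (n+1) : ℝ)))
        = (CT * t) ^ (n+1+1) / (Nat.factorial (n+1+1) : ℝ) := by
      have hk : (((n+1 : ℕ) : ℝ)+1) ≠ 0 := by positivity
      have hf : ((Nat.factorial (n+1) : ℝ)) ≠ 0 := by positivity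
      rw [Nat.factorial_succ (n+1)]
      push_cast
      field_simp
      ring
    have key3 : CT * (∑ k ∈ Finset.range (n + 1),
          ε (n - k + 1) m * (CT^k * t^(k+1) / ((k+1) * Nat.factorial k)))
        = ∑ k ∈ Finset.range (n + 1),
          ε (n - k + 1) m * (CT * t) ^ (k+1) / (Nat.factorial (k+1) : ℝ) := by
      simp only [Finset.mul_sum]
      refine Finset.sum_congr rfl fun k _ => ?_
      have hk : ((k:ℝ)+1) ≠ 0 := by positivity
      have hf : ((Nat.factorial k : ℝ)) ≠ 0 := by positivity
      rw [Nat.factorial_succ]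
      push_cast
      field_simp
      ring
    rw [Finset.sum_range_succ' (fun k => (2 * CT * t) ^ k / (Nat.factorial k : ℝ)) (n+1),
      Finset.sum_range_succ'
        (fun k => ε (n + 1 - k + 1) m * (CT * t) ^ k / (Nat.factorial k : ℝ)) (n+1)]
    simp only [pow_zero, Nat.factorial_zero, Nat.cast_one, div_one, Nat.succ_sub_succ,
      Nat.sub_zero, mul_one]
    rw [hcast, h2]
    linear_combination CT * key1 + CT * keyB + CT * key3
end
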